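/- arXiv:1607.08104 — 5 statements merged into one kernel-verified Lean document; each statement's English description precedes it below -/
import Mathlib

section
/- For every real number a > 1 and integers j0 ≥ l0 ≥ 1 such that 0 < 1 - a/l < 1 for all l ≥ l0, the series ∑_{j=j0}^∞ ∏_{l=l0}^{j} (1 - a/l) converges. -/
open Finset

/-! The recurrence `(c + n + 1) f (n + 1) = (c + n + 1 - a) f n` rewrites `(a - 1) f n` as the
difference `g n - g (n + 1)` with `g n = (c + n) f n`, so the partial sums of `f` telescope to
`(c f 0 - g N) / (a - 1) ≤ c f 0 / (a - 1)`. For `f j = ∏_{l = l0}^{j0 + j} (1 - a / l)` this is the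
recurrence with `c = j0`. -/

section Telescoping

variable {f : ℕ → ℝ} {a c : ℝ}

theorem sub_one_mul_sum_range_eq
    (hrec : ∀ n : ℕ, (c + n + 1) * f (n + 1) = (c + n + 1 - a) * f n) (N : ℕ) :
    (a - 1) * ∑ n ∈ range N, f n = c * f 0 - (c + N) * f N := by
  have hstep : ∀ n : ℕ, (a - 1) * f n = (c + n) * f n - (c + (n + 1 : ℕ)) * f (n + 1) := by
    intro n
    push_cast
    linear_combination hrec n
  rw [mul_sum, sum_congr rfl fun n _ => hstep n,
    sum_range_sub' (fun n : ℕ => (c + n) * f n) N]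
  simp

theorem summable_of_mul_succ_eq
    (hrec : ∀ n : ℕ, (c + n + 1) * f (n + 1) = (c + n + 1 - a) * f n)
    (hf : ∀ n, 0 ≤ f n) (ha : 1 < a) (hc : 0 ≤ c) : Summable f := by
  refine summable_of_sum_range_le (c := c * f 0 / (a - 1)) hf fun N => ?_
  rw [le_div_iff₀ (by linarith), mul_comm, sub_one_mul_sum_range_eq hrec N]
  have : 0 ≤ (c + N) * f N := mul_nonneg (by positivity) (hf N)
  linarith

end Telescoping

theorem stmt_0_general (a : ℝ) (ha : 1 < a) (l0 j0 : ℕ) (hj0 : l0 ≤ j0)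
    (h : ∀ l : ℕ, l0 ≤ l → 0 < 1 - a / (l : ℝ) ∧ 1 - a / (l : ℝ) < 1) :
    Summable (fun j : ℕ => ∏ l ∈ Finset.Icc l0 (j0 + j), (1 - a / (l : ℝ))) := by
  refine summable_of_mul_succ_eq (c := j0) (fun j => ?_)
    (fun j => prod_nonneg fun l hl => (h l (mem_Icc.mp hl).1).1.le) ha (Nat.cast_nonneg _)
  have hne : (j0 : ℝ) + j + 1 ≠ 0 := by positivity
  rw [show j0 + (j + 1) = j0 + j + 1 from rfl, prod_Icc_succ_top (by omega)]
  push_cast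
  field_simp

/-- For every real `a > 1` and integers `j0 ≥ l0 ≥ 1` such that `0 < 1 - a/l < 1`
for all `l ≥ l0`, the series `∑_{j=j0}^∞ ∏_{l=l0}^{j} (1 - a/l)` converges. -/
theorem stmt_0 (a : ℝ) (ha : 1 < a) (l0 j0 : ℕ) (hl0 : 1 ≤ l0) (hj0 : l0 ≤ j0)
    (h : ∀ l : ℕ, l0 ≤ l → 0 < 1 - a / (l : ℝ) ∧ 1 - a / (l : ℝ) < 1) :
    Summable (fun j : ℕ => ∏ l ∈ Finset.Icc l0 (j0 + j), (1 - a / (l : ℝ))) :=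
  stmt_0_general a ha l0 j0 hj0 h
end

section
/- For a complex number w with π/4 < |Re w| < π/2, one has |tan w| ≤ tan |Re w| < 1/(π/2 - |Re w|). -/
/-!
With `x = |Re w|` and `y = Im w`, one has `‖sin w‖² = sin² x + sinh² y` and
`‖cos w‖² = cos² x + sinh² y`, so `‖tan w‖²` arises from `tan² x = sin² x / cos² x` by adding
`sinh² y` to numerator and denominator; since `sin² x ≥ cos² x` for `x ≥ π/4`, this can only
decrease the ratio. The second bound is `tan x = 1 / tan (π/2 - x)` together with `t < tan t`.
-/

open Real

theorem Real.cos_sq_le_sin_sq {x : ℝ} (h1 : π / 4 ≤ x) (h2 : x ≤ 3 * π / 4) :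
    cos x ^ 2 ≤ sin x ^ 2 := by
  have : cos (2 * x) ≤ 0 := cos_nonpos_of_pi_div_two_le_of_le (by linarith) (by linarith)
  rw [cos_two_mul, ← sin_sq_add_cos_sq x] at this
  linarith

theorem Real.tan_lt_one_div_pi_div_two_sub {x : ℝ} (h0 : 0 < x) (h : x < π / 2) :
    tan x < 1 / (π / 2 - x) := by
  have hlt : π / 2 - x < tan (π / 2 - x) := lt_tan (by linarith) (by linarith)
  calc tan x = 1 / tan (π / 2 - x) := by rw [tan_pi_div_two_sub, one_div, inv_inv]
    _ < 1 / (π / 2 - x) := one_div_lt_one_div_of_lt (by linarith) hlt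

namespace Complex

theorem norm_sin_sq (z : ℂ) : ‖sin z‖ ^ 2 = Real.sin z.re ^ 2 + Real.sinh z.im ^ 2 := by
  rw [sin_eq, Complex.sq_norm, ← ofReal_sin, ← ofReal_cosh, ← ofReal_cos, ← ofReal_sinh,
    ← ofReal_mul, ← ofReal_mul, normSq_add_mul_I]
  linear_combination Real.sin z.re ^ 2 * Real.cosh_sq z.im
    + Real.sinh z.im ^ 2 * Real.sin_sq_add_cos_sq z.re

theorem norm_cos_sq (z : ℂ) : ‖cos z‖ ^ 2 = Real.cos z.re ^ 2 + Real.sinh z.im ^ 2 := by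
  rw [cos_eq, Complex.sq_norm, ← ofReal_sin, ← ofReal_cosh, ← ofReal_cos, ← ofReal_sinh,
    ← ofReal_mul, ← ofReal_mul, sub_eq_add_neg, ← neg_mul, ← ofReal_neg, normSq_add_mul_I]
  linear_combination Real.cos z.re ^ 2 * Real.cosh_sq z.im
    + Real.sinh z.im ^ 2 * Real.sin_sq_add_cos_sq z.re

theorem norm_tan_le_tan_abs_re {w : ℂ} (h1 : π / 4 ≤ |w.re|) (h2 : |w.re| < π / 2) :
    ‖tan w‖ ≤ Real.tan |w.re| := by
  set x := |w.re|
  have hx0 : 0 < x := (div_pos pi_pos four_pos).trans_le h1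
  have hcos : 0 < Real.cos x := Real.cos_pos_of_mem_Ioo ⟨by linarith, h2⟩
  have hcs := Real.cos_sq_le_sin_sq h1 (by linarith [pi_pos])
  have hcos_re : Real.cos w.re ^ 2 = Real.cos x ^ 2 := by rw [Real.cos_abs]
  have hsin_re : Real.sin w.re ^ 2 = Real.sin x ^ 2 := by rw [Real.sin_sq, Real.sin_sq, hcos_re]
  have htan : 0 ≤ Real.tan x := (Real.tan_pos_of_pos_of_lt_pi_div_two hx0 h2).le
  rw [← pow_le_pow_iff_left₀ (norm_nonneg _) htan two_ne_zero,
    tan_eq_sin_div_cos, norm_div, div_pow, norm_sin_sq, norm_cos_sq, hsin_re, hcos_re,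
    Real.tan_eq_sin_div_cos, div_pow, div_le_div_iff₀ (by positivity) (by positivity)]
  linear_combination (Real.sinh w.im ^ 2) * hcs

end Complex

/-- For a complex number `w` with `π/4 < |Re w| < π/2`, one has
`|tan w| ≤ tan |Re w| < 1/(π/2 - |Re w|)`. -/
theorem stmt_4 (w : ℂ) (h1 : π / 4 < |w.re|) (h2 : |w.re| < π / 2) :
    ‖Complex.tan w‖ ≤ Real.tan |w.re| ∧
    Real.tan |w.re| < 1 / (π / 2 - |w.re|) :=
  ⟨Complex.norm_tan_le_tan_abs_re h1.le h2,
    tan_lt_one_div_pi_div_two_sub ((div_pos pi_pos four_pos).trans h1) h2⟩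
end

section
/- Let ε ≠ 0 and u_ε(x) = (1/(2iε)) log((iε-x)/(iε+x)). If a complex number x satisfies -π/(2|ε|) < Re((ε/|ε|)·u_ε(x)) < -π/(4|ε|), then |x| ≤ 1/(π/(2|ε|) + Re((ε/|ε|)·u_ε(x))). -/
/-!
Put `a = iε` and `θ = arg ((a - x) / (a + x))`. Since `log` has imaginary part `arg`, the quantity
`Re ((ε / |ε|) u_ε(x))` equals `θ / (2|ε|)`, so the hypothesis says `θ < -π/2` and the claim
becomes `|x| (π + θ) ≤ 2|a|`. Now `π + θ` is the argument of `(x - a) / (x + a)`, the angle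
under which the segment `[-a, a]` is seen from `x`. If `|x| ≤ |a|` this angle is below `π/2 < 2`.
Otherwise, with `u = |a| / |x| < 1`, its tangent is at most `2u / (1 - u²) = tan (2 arctan u)`,
so the angle is at most `2 arctan u ≤ 2u`.
-/

open Real ComplexConjugate

lemma Real.arctan_le_self {u : ℝ} (hu : 0 ≤ u) : arctan u ≤ u := by
  simpa [tan_arctan] using le_tan (arctan_nonneg.mpr hu) (arctan_lt_pi_div_two u)

namespace Complex

lemma arg_eq_arctan_of_re_pos {v : ℂ} (hv : 0 < v.re) : arg v = Real.arctan (v.im / v.re) := by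
  have hlt := abs_lt.mp (abs_arg_lt_pi_div_two_iff.mpr (Or.inl hv))
  rw [← tan_arg, Real.arctan_tan hlt.1 hlt.2]

lemma arg_div_eq_arg_mul_conj (z w : ℂ) : arg (z / w) = arg (z * conj w) := by
  rcases eq_or_ne w 0 with rfl | hw
  · simp
  rw [div_eq_mul_inv, inv_def, ← mul_assoc,
    arg_mul_real (inv_pos.mpr (normSq_pos.mpr hw))]

lemma re_sub_mul_conj_add (a x : ℂ) :
    ((x - a) * conj (x + a)).re = ‖x‖ ^ 2 - ‖a‖ ^ 2 := by
  simp only [Complex.sq_norm, normSq_apply, mul_re,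
    conj_re, conj_im, sub_re, sub_im, add_re, add_im]
  ring

lemma im_sub_mul_conj_add_le (a x : ℂ) :
    ((x - a) * conj (x + a)).im ≤ 2 * ‖x‖ * ‖a‖ := by
  have him : ((x - a) * conj (x + a)).im = 2 * (x * conj a).im := by
    simp only [mul_im, conj_re, conj_im, sub_re, sub_im, add_re, add_im]
    ring
  have hle : (x * conj a).im ≤ ‖x‖ * ‖a‖ := by
    simpa [norm_mul] using (le_abs_self _).trans (abs_im_le_norm (x * conj a))
  linarith

/-- The angle under which the segment `[-a, a]` is seen from a point `x` with `‖a‖ < ‖x‖` is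
at most `2 ‖a‖ / ‖x‖`. -/
lemma norm_mul_arg_sub_mul_conj_add_le {a x : ℂ} (h : ‖a‖ < ‖x‖) :
    ‖x‖ * arg ((x - a) * conj (x + a)) ≤ 2 * ‖a‖ := by
  set v := (x - a) * conj (x + a)
  have hx : 0 < ‖x‖ := (norm_nonneg a).trans_lt h
  set u := ‖a‖ / ‖x‖ with hu
  have hu0 : 0 ≤ u := by positivity
  have hu1 : u < 1 := (div_lt_one hx).mpr h
  have hvre : 0 < v.re := by rw [re_sub_mul_conj_add]; nlinarith [norm_nonneg a]
  have hquot : v.im / v.re ≤ 2 * u / (1 - u ^ 2) := by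
    have heq : 2 * u / (1 - u ^ 2) = 2 * ‖x‖ * ‖a‖ / v.re := by
      rw [re_sub_mul_conj_add, hu]
      field_simp
    rw [heq]
    exact div_le_div_of_nonneg_right (im_sub_mul_conj_add_le a x) hvre.le
  have harg : arg v ≤ 2 * u := calc
    arg v = Real.arctan (v.im / v.re) := arg_eq_arctan_of_re_pos hvre
    _ ≤ Real.arctan (2 * u / (1 - u ^ 2)) := Real.arctan_le_arctan_iff.mpr hquot
    _ = 2 * Real.arctan u := (Real.two_mul_arctan (by linarith) hu1).symm
    _ ≤ 2 * u := by linarith [Real.arctan_le_self hu0]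
  calc ‖x‖ * arg v ≤ ‖x‖ * (2 * u) := mul_le_mul_of_nonneg_left harg hx.le
    _ = 2 * ‖a‖ := by rw [hu]; field_simp

lemma norm_mul_pi_add_arg_div_le {a x : ℂ} (h : arg ((a - x) / (a + x)) < -(π / 2)) :
    ‖x‖ * (π + arg ((a - x) / (a + x))) ≤ 2 * ‖a‖ := by
  set θ := arg ((a - x) / (a + x))
  have hθ : -π < θ := neg_pi_lt_arg _
  rcases le_or_gt ‖x‖ ‖a‖ with hxa | hxa
  · nlinarith [norm_nonneg x, pi_le_four]
  · have him : ((a - x) / (a + x)).im < 0 := arg_neg_iff.mp (by linarith [pi_pos])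
    have hneg : arg ((x - a) * conj (x + a)) = π + θ := by
      rw [← arg_div_eq_arg_mul_conj, ← neg_sub, neg_div, add_comm x,
        arg_neg_eq_arg_add_pi_of_im_neg him, add_comm]
    rw [← hneg]
    exact norm_mul_arg_sub_mul_conj_add_le hxa

end Complex

lemma re_mul_log_eq_arg_div (ε w : ℂ) :
    ((ε / (‖ε‖ : ℂ)) * ((1 / (2 * Complex.I * ε)) * Complex.log w)).re =
      Complex.arg w / (2 * ‖ε‖) := by
  rcases eq_or_ne ε 0 with rfl | hε
  · simp
  have hr : (‖ε‖ : ℂ) ≠ 0 := by exact_mod_cast norm_ne_zero_iff.mpr hε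
  have : (ε / (‖ε‖ : ℂ)) * ((1 / (2 * Complex.I * ε)) * Complex.log w) =
      Complex.log w * (-Complex.I) / ((2 * ‖ε‖ : ℝ) : ℂ) := by
    push_cast
    field_simp
    ring_nf
    simp [Complex.I_sq]
  rw [this, Complex.div_ofReal_re]
  simp [Complex.mul_re, Complex.log_im]

theorem stmt_7_general (ε : ℂ) (hε : ε ≠ 0) (x : ℂ)
    (h2 : ((ε / (‖ε‖ : ℂ)) *
        ((1 / (2 * Complex.I * ε)) *
          Complex.log ((Complex.I * ε - x) / (Complex.I * ε + x)))).re <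
      -(π / (4 * ‖ε‖))) :
    ‖x‖ ≤
      1 / (π / (2 * ‖ε‖) +
        ((ε / (‖ε‖ : ℂ)) *
          ((1 / (2 * Complex.I * ε)) *
            Complex.log ((Complex.I * ε - x) / (Complex.I * ε + x)))).re) := by
  have hr : 0 < 2 * ‖ε‖ := by positivity
  rw [re_mul_log_eq_arg_div] at h2 ⊢
  set θ := Complex.arg ((Complex.I * ε - x) / (Complex.I * ε + x))
  have hθ : θ < -(π / 2) := by
    rw [show -(π / (4 * ‖ε‖)) = -(π / 2) / (2 * ‖ε‖) by ring] at h2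
    exact (div_lt_div_iff_of_pos_right hr).mp h2
  have hpos : 0 < π + θ := by
    linarith [Complex.neg_pi_lt_arg ((Complex.I * ε - x) / (Complex.I * ε + x))]
  have hbound := Complex.norm_mul_pi_add_arg_div_le hθ
  rw [norm_mul, Complex.norm_I, one_mul] at hbound
  rwa [← add_div, one_div_div, le_div_iff₀ hpos]

/-- If `-π/(2|ε|) < Re((ε/|ε|)·u_ε(x)) < -π/(4|ε|)`, where
`u_ε(x) = (1/(2iε)) log((iε-x)/(iε+x))`, then
`|x| ≤ 1/(π/(2|ε|) + Re((ε/|ε|)·u_ε(x)))`. -/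
theorem stmt_7 (ε : ℂ) (hε : ε ≠ 0) (x : ℂ)
    (h1 : -(π / (2 * ‖ε‖)) <
      ((ε / (‖ε‖ : ℂ)) *
        ((1 / (2 * Complex.I * ε)) *
          Complex.log ((Complex.I * ε - x) / (Complex.I * ε + x)))).re)
    (h2 : ((ε / (‖ε‖ : ℂ)) *
        ((1 / (2 * Complex.I * ε)) *
          Complex.log ((Complex.I * ε - x) / (Complex.I * ε + x)))).re <
      -(π / (4 * ‖ε‖))) :
    ‖x‖ ≤
      1 / (π / (2 * ‖ε‖) +
        ((ε / (‖ε‖ : ℂ)) *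
          ((1 / (2 * Complex.I * ε)) *
            Complex.log ((Complex.I * ε - x) / (Complex.I * ε + x)))).re) :=
  stmt_7_general ε hε x h2
end

section
/- Let C be a compact subset of the complex plane not containing 0 and contained in a sector {x : |Im x| ≤ -γ Re x, |x| ≤ R} for some γ, R > 0. Then the functions u_ε(x) + π/(2ε), where u_ε(x) = (1/ε)·arctan(x/ε), converge uniformly on C to -1/x as ε → 0 with Re ε > 0 and |Im ε| < c|ε|². -/
/-!
Put `z = (x - iε)/(x + iε)`. For `x` in the sector and `ε` in the admissible region,
`Im z > 0`, so `log (-z) = log z - πi`, and the shift `π/(2ε)` exactly cancels this branch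
jump. Writing `z = 1 + u` with `u = -2iε/(x + iε)`, the linear term `u/(2iε) = -1/(x + iε)`
is `-1/x` up to `O(|ε|)`, and `log (1 + u) - u = O(|u|²) = O(|ε|²)`. The resulting bound
is `10|ε|/m²`, where `m > 0` bounds `|x|` from below on the closed set `C ∌ 0`.
-/

open Real

namespace Complex

lemma log_neg_of_im_pos {z : ℂ} (hz : 0 < z.im) : log (-z) = log z - π * I := by
  apply Complex.ext
  · simp [log_re]
  · simp [log_im, arg_neg_eq_arg_sub_pi_of_im_pos hz]

lemma norm_log_one_add_sub_self_le_sq {u : ℂ} (hu : ‖u‖ ≤ 1 / 2) :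
    ‖log (1 + u) - u‖ ≤ ‖u‖ ^ 2 := by
  have hinv : (1 - ‖u‖)⁻¹ ≤ 2 := by
    rw [inv_le_comm₀ (by linarith) two_pos]
    linarith
  calc ‖log (1 + u) - u‖ ≤ ‖u‖ ^ 2 * (1 - ‖u‖)⁻¹ / 2 :=
        norm_log_one_add_sub_self_le (by linarith)
    _ ≤ ‖u‖ ^ 2 * 2 / 2 := by gcongr
    _ = ‖u‖ ^ 2 := by ring

lemma re_neg_of_abs_im_le {γ : ℝ} (hγ : 0 < γ) {x : ℂ} (hx : |x.im| ≤ -γ * x.re)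
    (hx0 : x ≠ 0) : x.re < 0 := by
  have hre : x.re ≤ 0 := by nlinarith [abs_nonneg x.im]
  refine hre.lt_of_ne fun h => hx0 (Complex.ext h ?_)
  simpa [h] using hx

lemma mul_abs_im_lt_re {γ c : ℝ} (hγ : 0 ≤ γ) {ε : ℂ} (hre : 0 < ε.re)
    (him : |ε.im| < c * ‖ε‖ ^ 2) (hsmall : (1 + γ) * c * ‖ε‖ ≤ 1) :
    γ * |ε.im| < ε.re := by
  have hnorm : ‖ε‖ ≤ ε.re + |ε.im| := by
    simpa [abs_of_pos hre] using norm_le_abs_re_add_abs_im ε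
  have hquad : (1 + γ) * c * ‖ε‖ ^ 2 ≤ ‖ε‖ := by
    nlinarith [mul_le_mul_of_nonneg_right hsmall (norm_nonneg ε)]
  nlinarith [mul_le_mul_of_nonneg_left him.le hγ]

lemma mul_re_add_mul_im_neg_of_sector {γ : ℝ} {x ε : ℂ} (hx : |x.im| ≤ -γ * x.re)
    (hxre : x.re < 0) (hε : γ * |ε.im| < ε.re) : ε.re * x.re + ε.im * x.im < 0 := by
  have hprod : ε.im * x.im ≤ |ε.im| * |x.im| := by rw [← abs_mul]; exact le_abs_self _
  nlinarith [mul_le_mul_of_nonneg_left hx (abs_nonneg ε.im),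
    mul_lt_mul_of_pos_right hε (neg_pos.2 hxre)]

lemma im_sub_div_add_I_mul (x ε : ℂ) :
    ((x - I * ε) / (x + I * ε)).im
      = -2 * (ε.re * x.re + ε.im * x.im) / normSq (x + I * ε) := by
  simp only [div_im, sub_re, sub_im, add_re, add_im, mul_re, mul_im, I_re, I_im]
  ring

lemma im_sub_div_add_I_mul_pos {x ε : ℂ} (h : ε.re * x.re + ε.im * x.im < 0) :
    0 < ((x - I * ε) / (x + I * ε)).im := by
  have hne : x + I * ε ≠ 0 := by
    intro h0
    rw [eq_neg_of_add_eq_zero_left h0] at h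
    simp only [neg_re, neg_im, mul_re, mul_im, I_re, I_im] at h
    linarith
  rw [im_sub_div_add_I_mul]
  exact div_pos (by linarith) (normSq_pos.2 hne)

lemma log_I_mul_sub_div_add_add_pi_div {x ε : ℂ} (hε : ε ≠ 0)
    (hz : 0 < ((x - I * ε) / (x + I * ε)).im) :
    1 / (2 * I * ε) * log ((I * ε - x) / (I * ε + x)) + π / (2 * ε)
      = 1 / (2 * (I * ε)) * log ((x - I * ε) / (x + I * ε)) := by
  have hflip : (I * ε - x) / (I * ε + x) = -((x - I * ε) / (x + I * ε)) := by
    rw [add_comm, ← neg_sub, neg_div]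
  rw [hflip, log_neg_of_im_pos hz]
  field_simp
  ring_nf

lemma norm_log_sub_div_add_add_inv_le {A x : ℂ} (hA : A ≠ 0) (hAx : 8 * ‖A‖ ≤ ‖x‖) :
    ‖1 / (2 * A) * log ((x - A) / (x + A)) + 1 / x‖ ≤ 10 * ‖A‖ / ‖x‖ ^ 2 := by
  have hApos : 0 < ‖A‖ := norm_pos_iff.2 hA
  have hxpos : 0 < ‖x‖ := by linarith
  have hxA : ‖x‖ / 2 ≤ ‖x + A‖ := by
    have := norm_sub_norm_le x (-A)
    rw [sub_neg_eq_add, norm_neg] at this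
    linarith
  have hx0 : x ≠ 0 := norm_pos_iff.1 hxpos
  have hxA0 : x + A ≠ 0 := norm_pos_iff.1 (by linarith)
  set u := -2 * A / (x + A) with hu
  have hu_le : ‖u‖ ≤ 4 * ‖A‖ / ‖x‖ := by
    rw [hu, norm_div, norm_mul, norm_neg, Complex.norm_two,
      div_le_div_iff₀ (by linarith) hxpos]
    nlinarith
  have hu_half : ‖u‖ ≤ 1 / 2 :=
    hu_le.trans (by rw [div_le_iff₀ hxpos]; linarith)
  have hsplit : 1 / (2 * A) * log ((x - A) / (x + A)) + 1 / x
      = 1 / (2 * A) * (log (1 + u) - u) + A / (x * (x + A)) := by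
    have h1u : (x - A) / (x + A) = 1 + u := by
      rw [hu]; field_simp; ring
    rw [h1u, hu]
    field_simp
    ring
  have hquad : ‖1 / (2 * A) * (log (1 + u) - u)‖ ≤ 8 * ‖A‖ / ‖x‖ ^ 2 := by
    rw [norm_mul, norm_div, norm_one, norm_mul, Complex.norm_two]
    calc 1 / (2 * ‖A‖) * ‖log (1 + u) - u‖
        ≤ 1 / (2 * ‖A‖) * (4 * ‖A‖ / ‖x‖) ^ 2 := by
          gcongr
          exact (norm_log_one_add_sub_self_le_sq hu_half).trans (by gcongr)
      _ = 8 * ‖A‖ / ‖x‖ ^ 2 := by field_simp; ring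
  have hlin : ‖A / (x * (x + A))‖ ≤ 2 * ‖A‖ / ‖x‖ ^ 2 := by
    rw [norm_div, norm_mul, div_le_div_iff₀ (by positivity) (by positivity)]
    nlinarith [mul_le_mul_of_nonneg_left hxA hxpos.le]
  calc _ = ‖1 / (2 * A) * (log (1 + u) - u) + A / (x * (x + A))‖ := by rw [hsplit]
    _ ≤ 8 * ‖A‖ / ‖x‖ ^ 2 + 2 * ‖A‖ / ‖x‖ ^ 2 := norm_add_le_of_le hquad hlin
    _ = 10 * ‖A‖ / ‖x‖ ^ 2 := by ring

end Complex

lemma IsClosed.exists_pos_le_norm {E : Type*} [SeminormedAddCommGroup E] {s : Set E}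
    (hs : IsClosed s) (h0 : (0 : E) ∉ s) : ∃ m > 0, ∀ x ∈ s, m ≤ ‖x‖ := by
  obtain ⟨m, hm, hball⟩ := Metric.isOpen_iff.1 hs.isOpen_compl 0 h0
  refine ⟨m, hm, fun x hx => not_lt.1 fun hlt => hball ?_ hx⟩
  simpa using hlt

theorem stmt_8_general (γ R c : ℝ) (hγ : 0 < γ) (hc : 0 < c)
    (C : Set ℂ) (hC : IsCompact C)
    (hsec : ∀ x ∈ C, |x.im| ≤ -γ * x.re ∧ ‖x‖ ≤ R ∧ x ≠ 0) :
    ∀ δ : ℝ, 0 < δ → ∃ η : ℝ, 0 < η ∧ ∀ ε : ℂ, ε ≠ 0 → ‖ε‖ < η →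
      0 < ε.re → |ε.im| < c * ‖ε‖ ^ 2 →
      ∀ x ∈ C,
        ‖(1 / (2 * Complex.I * ε)) *
            Complex.log ((Complex.I * ε - x) / (Complex.I * ε + x)) +
            (π : ℂ) / (2 * ε) - (-1 / x)‖ < δ := by
  intro δ hδ
  obtain ⟨m, hm, hmC⟩ := hC.isClosed.exists_pos_le_norm fun h0 => (hsec 0 h0).2.2 rfl
  refine ⟨min (m / 8) (min (δ * m ^ 2 / 10) (1 / ((1 + γ) * c))), by positivity, ?_⟩
  intro ε hε hεη hεre hεim x hx
  obtain ⟨hxsec, -, hx0⟩ := hsec x hx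
  have hxm := hmC x hx
  simp only [lt_min_iff] at hεη
  obtain ⟨hε8, hεδ, hεc⟩ := hεη
  have hεsec : γ * |ε.im| < ε.re := Complex.mul_abs_im_lt_re hγ.le hεre hεim
    (by rw [lt_div_iff₀ (by positivity)] at hεc; linarith)
  have hxre := Complex.re_neg_of_abs_im_le hγ hxsec hx0
  have hz := Complex.im_sub_div_add_I_mul_pos
    (Complex.mul_re_add_mul_im_neg_of_sector hxsec hxre hεsec)
  rw [neg_div, sub_neg_eq_add, Complex.log_I_mul_sub_div_add_add_pi_div hε hz]
  have hIε : ‖Complex.I * ε‖ = ‖ε‖ := by rw [norm_mul, Complex.norm_I, one_mul]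
  calc _ ≤ 10 * ‖Complex.I * ε‖ / ‖x‖ ^ 2 :=
        Complex.norm_log_sub_div_add_add_inv_le (mul_ne_zero Complex.I_ne_zero hε)
          (by rw [hIε]; linarith)
    _ ≤ 10 * ‖ε‖ / m ^ 2 := by rw [hIε]; gcongr
    _ < δ := by rw [div_lt_iff₀ (by positivity)]; linarith

/-- On a compact subset `C` of the sector `{x : |Im x| ≤ -γ Re x, 0 < |x| ≤ R}`, the
functions `u_ε(x) + π/(2ε)` converge uniformly to `-1/x` as `ε → 0` with `Re ε > 0`
and `|Im ε| < c|ε|²`, where `u_ε(x) = (1/(2iε)) log((iε-x)/(iε+x))`. -/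
theorem stmt_8 (γ R c : ℝ) (hγ : 0 < γ) (hR : 0 < R) (hc : 0 < c)
    (C : Set ℂ) (hC : IsCompact C)
    (hsec : ∀ x ∈ C, |x.im| ≤ -γ * x.re ∧ ‖x‖ ≤ R ∧ x ≠ 0) :
    ∀ δ : ℝ, 0 < δ → ∃ η : ℝ, 0 < η ∧ ∀ ε : ℂ, ε ≠ 0 → ‖ε‖ < η →
      0 < ε.re → |ε.im| < c * ‖ε‖ ^ 2 →
      ∀ x ∈ C,
        ‖(1 / (2 * Complex.I * ε)) *
            Complex.log ((Complex.I * ε - x) / (Complex.I * ε + x)) +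
            (π : ℂ) / (2 * ε) - (-1 / x)‖ < δ :=
  stmt_8_general γ R c hγ hc C hC hsec
end

section
/- Let ρ > 1 be real, ρ' with 1 < ρ' < ρ, and 0 < γ' small enough that ρ' < ρ(1-γ')/√(1+γ'²). If a complex number x satisfies |Im x| ≤ γ'·|Re x| and Re x < 0, then |1 + ρx| ≤ 1 - ρ·((1-γ')/√(1+γ'²))·|x|, provided ρ|x| is small enough (e.g., ρ|x| ≤ 1). -/
/-!
Write `s = √(1 + γ'²)`. In the sector `|Im y| ≤ γ' |Re y|` we have `|y| ≤ s |Re y|`, so for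
`Re y ≤ 0` the expansion `|1 + y|² = 1 + 2 Re y + |y|²` is at most `1 - 2|y|/s + |y|²`.
Comparing with `(1 - (1 - γ')|y|/s)²` leaves the inequality `γ' |y| (|y| - s) ≤ 0`, which
holds as soon as `|y| ≤ 1 ≤ s`. The theorem is the case `y = ρ x`.
-/

namespace Complex

theorem norm_le_sqrt_one_add_sq_mul_abs_re {γ : ℝ} {y : ℂ} (him : |y.im| ≤ γ * |y.re|) :
    ‖y‖ ≤ √(1 + γ ^ 2) * |y.re| := by
  have him_sq : y.im ^ 2 ≤ γ ^ 2 * y.re ^ 2 := by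
    simpa only [sq_abs, mul_pow] using pow_le_pow_left₀ (abs_nonneg _) him 2
  calc ‖y‖ = √(y.re ^ 2 + y.im ^ 2) := norm_eq_sqrt_sq_add_sq y
    _ ≤ √((1 + γ ^ 2) * |y.re| ^ 2) := Real.sqrt_le_sqrt (by rw [sq_abs]; linarith)
    _ = √(1 + γ ^ 2) * |y.re| := by
      rw [Real.sqrt_mul (by positivity), Real.sqrt_sq (abs_nonneg _)]

theorem norm_one_add_sq_eq (y : ℂ) : ‖1 + y‖ ^ 2 = 1 + 2 * y.re + ‖y‖ ^ 2 := by
  simp only [Complex.sq_norm, normSq_apply, add_re, add_im, one_re, one_im]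
  ring

theorem norm_one_add_le_of_abs_im_le {γ : ℝ} (hγ : 0 ≤ γ) {y : ℂ} (hre : y.re ≤ 0)
    (him : |y.im| ≤ γ * |y.re|) (hy : ‖y‖ ≤ 1) :
    ‖1 + y‖ ≤ 1 - (1 - γ) / √(1 + γ ^ 2) * ‖y‖ := by
  set s := √(1 + γ ^ 2)
  set a := ‖y‖
  have hs_sq : s ^ 2 = 1 + γ ^ 2 := Real.sq_sqrt (by positivity)
  have hs : 1 ≤ s := Real.one_le_sqrt.mpr (by nlinarith)
  have ha : 0 ≤ a := norm_nonneg y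
  have ha' : 0 ≤ ‖1 + y‖ := norm_nonneg _
  have hre_le : s * y.re ≤ -a := by
    have := norm_le_sqrt_one_add_sq_mul_abs_re him
    rw [abs_of_nonpos hre] at this
    linarith
  set c := (1 - γ) / s
  have hsc : s * c = 1 - γ := mul_div_cancel₀ _ (by positivity)
  have hc : |c| ≤ 1 := by
    rw [abs_div, abs_of_pos (by linarith : 0 < s), div_le_one (by linarith)]
    exact abs_le.mpr ⟨by nlinarith, by linarith⟩
  have hrhs : 0 ≤ 1 - c * a := by
    nlinarith [mul_le_mul_of_nonneg_right ((le_abs_self c).trans hc) ha]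
  -- after multiplying by `s²`, what remains is `γ a (s - a) ≥ 0`
  have hsq : s ^ 2 * ‖1 + y‖ ^ 2 ≤ s ^ 2 * (1 - c * a) ^ 2 := by
    have hγa : 0 ≤ γ * a * (s - a) := by have := hy.trans hs; positivity
    rw [norm_one_add_sq_eq]
    linear_combination 2 * s * hre_le + 2 * hγa + a ^ 2 * hs_sq
      + (2 * s * a - a ^ 2 * (s * c + 1 - γ)) * hsc
  exact (pow_le_pow_iff_left₀ ha' hrhs two_ne_zero).mp (le_of_mul_le_mul_left hsq (by positivity))

end Complex

theorem stmt_14_general (ρ γ' : ℝ) (hρ : 1 < ρ)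
    (hγ0 : 0 < γ')
    (x : ℂ) (hre : x.re < 0) (him : |x.im| ≤ γ' * |x.re|)
    (hsmall : ρ * ‖x‖ ≤ 1) :
    ‖1 + (ρ : ℂ) * x‖ ≤
      1 - ρ * ((1 - γ') / Real.sqrt (1 + γ' ^ 2)) * ‖x‖ := by
  have hρ0 : 0 < ρ := by linarith
  have hnorm : ‖(ρ : ℂ) * x‖ = ρ * ‖x‖ := by
    rw [norm_mul, Complex.norm_real, Real.norm_of_nonneg hρ0.le]
  have key := Complex.norm_one_add_le_of_abs_im_le hγ0.le (y := ρ * x)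
    (by rw [Complex.re_ofReal_mul]; exact mul_nonpos_of_nonneg_of_nonpos hρ0.le hre.le)
    (by
      simp only [Complex.re_ofReal_mul, Complex.im_ofReal_mul, abs_mul, abs_of_pos hρ0]
      rw [mul_left_comm]
      exact mul_le_mul_of_nonneg_left him hρ0.le)
    (hnorm ▸ hsmall)
  rw [hnorm] at key
  linarith

/-- If `|Im x| ≤ γ'·|Re x|`, `Re x < 0` and `ρ|x| ≤ 1` with `ρ > 1`,
`0 < γ' < 1` and `ρ' < ρ(1-γ')/√(1+γ'²)` for some `ρ' > 1`, then
`|1 + ρx| ≤ 1 - ρ·((1-γ')/√(1+γ'²))·|x|`. -/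
theorem stmt_14 (ρ ρ' γ' : ℝ) (hρ : 1 < ρ) (hρ' : 1 < ρ')
    (hγ0 : 0 < γ') (hγ1 : γ' < 1)
    (hcomp : ρ' < ρ * (1 - γ') / Real.sqrt (1 + γ' ^ 2))
    (x : ℂ) (hre : x.re < 0) (him : |x.im| ≤ γ' * |x.re|)
    (hsmall : ρ * ‖x‖ ≤ 1) :
    ‖1 + (ρ : ℂ) * x‖ ≤
      1 - ρ * ((1 - γ') / Real.sqrt (1 + γ' ^ 2)) * ‖x‖ :=
  stmt_14_general ρ γ' hρ hγ0 x hre him hsmall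
end
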